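/- Let D ∈ ℝ^{m×m} with D⁻¹ + D⁻⊤ positive definite, and let φ : ℝ^m → ℝ be C¹ with ∇φ Lipschitz of constant L < λ_min((D⁻¹ + D⁻⊤)/2). Let S ⊆ ℝ^m be nonempty closed convex and C ∈ ℝ^{m×n}, x ∈ ℝⁿ. Then for ε > 0 sufficiently small, the map y ↦ (I + εD⁻¹)⁻¹ (Proj_S(y) − ε∇φ(y) + εD⁻¹Cx) is a contraction on ℝ^m, hence has a unique fixed point. -/

import Mathlib

open scoped Matrix RealInnerProductSpace

/-- Smallest eigenvalue of a symmetric matrix, via the Rayleigh quotient. -/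
noncomputable def lamMin {m : ℕ} (M : Matrix (Fin m) (Fin m) ℝ) : ℝ :=
  ⨅ v : {v : Fin m → ℝ // v ⬝ᵥ v = 1}, (v : Fin m → ℝ) ⬝ᵥ (M *ᵥ (v : Fin m → ℝ))

lemma inner_eq_dot' {m : ℕ} (v w : EuclideanSpace ℝ (Fin m)) :
    ⟪v, w⟫ = (WithLp.equiv 2 (Fin m → ℝ) v) ⬝ᵥ (WithLp.equiv 2 (Fin m → ℝ) w) := by
  simp [PiLp.inner_apply, dotProduct, mul_comm]

lemma dot_self_pos' {m : ℕ} {v : Fin m → ℝ} (h : v ≠ 0) : 0 < v ⬝ᵥ v := by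
  have h0 : 0 ≤ v ⬝ᵥ v := Finset.sum_nonneg fun i _ => mul_self_nonneg _
  have h1 : v ⬝ᵥ v ≠ 0 := fun hc => h (dotProduct_self_eq_zero.mp hc)
  exact lt_of_le_of_ne h0 (Ne.symm h1)

lemma lamMin_le_rayleigh' {m : ℕ} (M : Matrix (Fin m) (Fin m) ℝ) (v : Fin m → ℝ)
    (hv : v ⬝ᵥ v = 1) : lamMin M ≤ v ⬝ᵥ (M *ᵥ v) := by
  have hbdd : BddBelow (Set.range fun u : {u : Fin m → ℝ // u ⬝ᵥ u = 1} =>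
      (u : Fin m → ℝ) ⬝ᵥ (M *ᵥ (u : Fin m → ℝ))) := by
    set T : EuclideanSpace ℝ (Fin m) →L[ℝ] EuclideanSpace ℝ (Fin m) :=
      LinearMap.toContinuousLinearMap (Matrix.toEuclideanLin M) with hT
    refine ⟨-‖T‖, ?_⟩
    rintro _ ⟨⟨u, hu⟩, rfl⟩
    set uh : EuclideanSpace ℝ (Fin m) := (WithLp.equiv 2 (Fin m → ℝ)).symm u with huh
    have hnu : ‖uh‖ = 1 := by
      have h2 : ⟪uh, uh⟫ = 1 := by rw [inner_eq_dot']; simpa [huh] using hu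
      have h3 : ‖uh‖ ^ 2 = 1 := by rw [← real_inner_self_eq_norm_sq, h2]
      nlinarith [norm_nonneg uh]
    have hval : (u ⬝ᵥ (M *ᵥ u)) = ⟪uh, T uh⟫ := by
      rw [inner_eq_dot']
      simp [hT, huh, Matrix.toEuclideanLin_apply]
    have hcs : |⟪uh, T uh⟫| ≤ ‖uh‖ * ‖T uh‖ := abs_real_inner_le_norm _ _
    have hTn : ‖T uh‖ ≤ ‖T‖ := by
      calc ‖T uh‖ ≤ ‖T‖ * ‖uh‖ := T.le_opNorm uh
      _ = ‖T‖ := by rw [hnu, mul_one]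
    show -‖T‖ ≤ u ⬝ᵥ (M *ᵥ u)
    rw [hval]
    have h4 := abs_le.mp hcs
    rw [hnu, one_mul] at h4
    linarith [h4.1]
  exact ciInf_le hbdd (⟨v, hv⟩ : {u : Fin m → ℝ // u ⬝ᵥ u = 1})

lemma coercive' {m : ℕ} (A : Matrix (Fin m) (Fin m) ℝ) (v : Fin m → ℝ) :
    lamMin (((1 : ℝ) / 2) • (A + Aᵀ)) * (v ⬝ᵥ v) ≤ v ⬝ᵥ (A *ᵥ v) := by
  by_cases hv : v = 0
  · simp [hv]
  · have hvv : 0 < v ⬝ᵥ v := dot_self_pos' hv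
    set c : ℝ := Real.sqrt (v ⬝ᵥ v) with hc
    have hcpos : 0 < c := Real.sqrt_pos.mpr hvv
    have hc2 : c * c = v ⬝ᵥ v := Real.mul_self_sqrt hvv.le
    set u : Fin m → ℝ := c⁻¹ • v with hu
    have huu : u ⬝ᵥ u = 1 := by
      rw [hu, smul_dotProduct, dotProduct_smul, smul_eq_mul, smul_eq_mul, ← hc2]
      field_simp
    have hray := lamMin_le_rayleigh' (((1 : ℝ) / 2) • (A + Aᵀ)) u huu
    have htr : v ⬝ᵥ (Aᵀ *ᵥ v) = v ⬝ᵥ (A *ᵥ v) := by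
      rw [Matrix.dotProduct_mulVec, Matrix.vecMul_transpose, dotProduct_comm]
    have hexp : u ⬝ᵥ ((((1 : ℝ) / 2) • (A + Aᵀ)) *ᵥ u) = c⁻¹ * c⁻¹ * (v ⬝ᵥ (A *ᵥ v)) := by
      rw [hu]
      simp only [Matrix.smul_mulVec, Matrix.add_mulVec, Matrix.mulVec_smul,
        smul_dotProduct, dotProduct_smul, dotProduct_add, smul_eq_mul, htr]
      ring
    rw [hexp] at hray
    have h5 := mul_le_mul_of_nonneg_right hray hvv.le
    have h6 : (c⁻¹ * c⁻¹ * (v ⬝ᵥ (A *ᵥ v))) * (v ⬝ᵥ v) = v ⬝ᵥ (A *ᵥ v) := by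
      rw [← hc2]; field_simp
    linarith [h5, h6.ge]

/-- For `ε > 0` sufficiently small, the map
`y ↦ (I + εD⁻¹)⁻¹ (Proj_S(y) − ε∇φ(y) + εD⁻¹Cx)` is a contraction, hence has a
unique fixed point (well-posedness of the regularized closed loop). -/
theorem stmt12 {m n : ℕ} (D : Matrix (Fin m) (Fin m) ℝ) (hDdet : IsUnit D.det)
    (hpd : ∀ w : Fin m → ℝ, w ≠ 0 → 0 < w ⬝ᵥ ((D⁻¹ + D⁻¹ᵀ) *ᵥ w))
    (φ : EuclideanSpace ℝ (Fin m) → ℝ) (hφ : ConvexOn ℝ Set.univ φ)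
    (gradφ : EuclideanSpace ℝ (Fin m) → EuclideanSpace ℝ (Fin m))
    (hgrad : ∀ y, HasGradientAt φ (gradφ y) y)
    (L : ℝ) (hL0 : 0 ≤ L) (hLip : LipschitzWith (Real.toNNReal L) gradφ)
    (hLlt : L < lamMin (((1 : ℝ) / 2) • (D⁻¹ + D⁻¹ᵀ)))
    (S : Set (EuclideanSpace ℝ (Fin m)))
    (hne : S.Nonempty) (hcl : IsClosed S) (hconv : Convex ℝ S)
    (proj : EuclideanSpace ℝ (Fin m) → EuclideanSpace ℝ (Fin m))
    (hproj : ∀ y, proj y ∈ S ∧ ∀ σ ∈ S, ‖y - proj y‖ ≤ ‖y - σ‖)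
    (C : Matrix (Fin m) (Fin n) ℝ) (x : EuclideanSpace ℝ (Fin n)) :
    ∃ ε₀ > (0 : ℝ), ∀ ε : ℝ, 0 < ε → ε < ε₀ →
      ∃ K : NNReal, K < 1 ∧
        LipschitzWith K (fun y : EuclideanSpace ℝ (Fin m) =>
          Matrix.toEuclideanLin ((1 + ε • D⁻¹)⁻¹)
            (proj y - ε • gradφ y + ε • Matrix.toEuclideanLin D⁻¹
              (Matrix.toEuclideanLin C x))) ∧
        ∃! y : EuclideanSpace ℝ (Fin m),
          Matrix.toEuclideanLin ((1 + ε • D⁻¹)⁻¹)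
            (proj y - ε • gradφ y + ε • Matrix.toEuclideanLin D⁻¹
              (Matrix.toEuclideanLin C x)) = y := by
  classical
  set μ : ℝ := lamMin (((1 : ℝ) / 2) • (D⁻¹ + D⁻¹ᵀ)) with hμ
  have hμpos : 0 < μ := lt_of_le_of_lt hL0 hLlt
  -- projection is nonexpansive
  haveI : Nonempty S := hne.to_subtype
  have hvar : ∀ y, ∀ σ ∈ S, ⟪y - proj y, σ - proj y⟫ ≤ 0 := by
    intro y
    have heq : ‖y - proj y‖ = ⨅ w : S, ‖y - (w : EuclideanSpace ℝ (Fin m))‖ := by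
      refine le_antisymm (le_ciInf fun w => (hproj y).2 w w.2) ?_
      exact ciInf_le ⟨0, by rintro _ ⟨w, rfl⟩; exact norm_nonneg _⟩
        (⟨proj y, (hproj y).1⟩ : S)
    exact (norm_eq_iInf_iff_real_inner_le_zero hconv (hproj y).1).1 heq
  have hproj_lip : ∀ a b, ‖proj a - proj b‖ ≤ ‖a - b‖ := by
    intro a b
    have h1 := hvar a (proj b) (hproj b).1
    have h2 := hvar b (proj a) (hproj a).1
    have key : ⟪proj a - proj b, proj a - proj b⟫ ≤ ⟪a - b, proj a - proj b⟫ := by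
      have expand : ⟪a - b, proj a - proj b⟫ - ⟪proj a - proj b, proj a - proj b⟫ =
          -⟪a - proj a, proj b - proj a⟫ - ⟪b - proj b, proj a - proj b⟫ := by
        simp only [inner_sub_left, inner_sub_right]; ring
      linarith
    have hsq : ‖proj a - proj b‖ ^ 2 ≤ ‖a - b‖ * ‖proj a - proj b‖ := by
      calc ‖proj a - proj b‖ ^ 2 = ⟪proj a - proj b, proj a - proj b⟫ :=
            (real_inner_self_eq_norm_sq _).symm
        _ ≤ ⟪a - b, proj a - proj b⟫ := key
        _ ≤ ‖a - b‖ * ‖proj a - proj b‖ := real_inner_le_norm _ _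
    rcases eq_or_lt_of_le (norm_nonneg (proj a - proj b)) with h | h
    · rw [← h]; exact norm_nonneg _
    · nlinarith
  refine ⟨1, one_pos, fun ε hε _ => ?_⟩
  set A : Matrix (Fin m) (Fin m) ℝ := 1 + ε • D⁻¹ with hA
  -- coercivity of D⁻¹
  have hco : ∀ v : Fin m → ℝ, μ * (v ⬝ᵥ v) ≤ v ⬝ᵥ (D⁻¹ *ᵥ v) := fun v => coercive' D⁻¹ v
  have hA_low : ∀ v : Fin m → ℝ, (1 + ε * μ) * (v ⬝ᵥ v) ≤ v ⬝ᵥ (A *ᵥ v) := by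
    intro v
    have hvv : 0 ≤ v ⬝ᵥ v := Finset.sum_nonneg fun i _ => mul_self_nonneg _
    have : v ⬝ᵥ (A *ᵥ v) = v ⬝ᵥ v + ε * (v ⬝ᵥ (D⁻¹ *ᵥ v)) := by
      rw [hA, Matrix.add_mulVec, Matrix.smul_mulVec, Matrix.one_mulVec,
        dotProduct_add, dotProduct_smul, smul_eq_mul]
    rw [this]
    nlinarith [hco v]
  have hμ1 : (0 : ℝ) < 1 + ε * μ := by nlinarith
  have hAunit : IsUnit A := by
    rw [← Matrix.mulVec_injective_iff_isUnit]
    intro a b hab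
    by_contra hne'
    have hw : a - b ≠ 0 := sub_ne_zero.mpr hne'
    have hz : A *ᵥ (a - b) = 0 := by
      rw [Matrix.mulVec_sub, hab, sub_self]
    have := hA_low (a - b)
    rw [hz, dotProduct_zero] at this
    nlinarith [dot_self_pos' hw, mul_pos hμ1 (dot_self_pos' hw)]
  have hAinv : A * A⁻¹ = 1 :=
    Matrix.mul_nonsing_inv A ((Matrix.isUnit_iff_isUnit_det A).mp hAunit)
  -- lower norm bound for A on Euclidean space
  have hE : ∀ v : EuclideanSpace ℝ (Fin m),
      (1 + ε * μ) * ‖v‖ ≤ ‖Matrix.toEuclideanLin A v‖ := by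
    intro v
    rcases eq_or_ne v 0 with rfl | hv0
    · simp
    have hvpos : 0 < ‖v‖ := norm_pos_iff.mpr hv0
    have hin : ⟪v, Matrix.toEuclideanLin A v⟫ =
        (WithLp.equiv 2 (Fin m → ℝ) v) ⬝ᵥ (A *ᵥ (WithLp.equiv 2 (Fin m → ℝ) v)) := by
      rw [inner_eq_dot']; simp [Matrix.toEuclideanLin_apply]
    have hnv : ‖v‖ ^ 2 = (WithLp.equiv 2 (Fin m → ℝ) v) ⬝ᵥ (WithLp.equiv 2 (Fin m → ℝ) v) := by
      rw [← real_inner_self_eq_norm_sq, inner_eq_dot']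
    have hlow : (1 + ε * μ) * ‖v‖ ^ 2 ≤ ⟪v, Matrix.toEuclideanLin A v⟫ := by
      rw [hin, hnv]; exact hA_low _
    have hcs : ⟪v, Matrix.toEuclideanLin A v⟫ ≤ ‖v‖ * ‖Matrix.toEuclideanLin A v‖ :=
      real_inner_le_norm _ _
    have : (1 + ε * μ) * ‖v‖ * ‖v‖ ≤ ‖Matrix.toEuclideanLin A v‖ * ‖v‖ := by nlinarith
    exact le_of_mul_le_mul_right (by linarith [this]) hvpos
  have hBinv : ∀ w : EuclideanSpace ℝ (Fin m),
      ‖Matrix.toEuclideanLin A⁻¹ w‖ ≤ (1 + ε * μ)⁻¹ * ‖w‖ := by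
    intro w
    have hcomp : Matrix.toEuclideanLin A (Matrix.toEuclideanLin A⁻¹ w) = w := by
      simp [Matrix.toEuclideanLin_apply, Matrix.mulVec_mulVec, hAinv]
    have := hE (Matrix.toEuclideanLin A⁻¹ w)
    rw [hcomp] at this
    rw [inv_mul_eq_div, le_div_iff₀ hμ1, mul_comm]
    exact this
  -- the contraction constant
  set k : ℝ := (1 + ε * L) / (1 + ε * μ) with hk
  have hknn : 0 ≤ k := div_nonneg (by nlinarith) hμ1.le
  have hklt : k < 1 := by
    rw [hk, div_lt_one hμ1]
    nlinarith
  refine ⟨Real.toNNReal k, ?_, ?_, ?_⟩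
  · rw [← Real.toNNReal_one]
    exact (Real.toNNReal_lt_toNNReal_iff one_pos).mpr hklt
  all_goals {
    have hlipf : LipschitzWith (Real.toNNReal k) (fun y : EuclideanSpace ℝ (Fin m) =>
        Matrix.toEuclideanLin ((1 + ε • D⁻¹)⁻¹)
          (proj y - ε • gradφ y + ε • Matrix.toEuclideanLin D⁻¹
            (Matrix.toEuclideanLin C x))) := by
      apply LipschitzWith.of_dist_le_mul
      intro a b
      simp only [dist_eq_norm, Real.coe_toNNReal k hknn]
      have hmapsub : Matrix.toEuclideanLin ((1 + ε • D⁻¹)⁻¹)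
            (proj a - ε • gradφ a + ε • Matrix.toEuclideanLin D⁻¹ (Matrix.toEuclideanLin C x)) -
          Matrix.toEuclideanLin ((1 + ε • D⁻¹)⁻¹)
            (proj b - ε • gradφ b + ε • Matrix.toEuclideanLin D⁻¹ (Matrix.toEuclideanLin C x)) =
          Matrix.toEuclideanLin A⁻¹
            ((proj a - proj b) - ε • (gradφ a - gradφ b)) := by
        rw [← map_sub, hA]
        congr 1
        rw [smul_sub]
        abel
      rw [hmapsub]
      have hgl : ‖gradφ a - gradφ b‖ ≤ L * ‖a - b‖ := by
        have := hLip.dist_le_mul a b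
        rw [dist_eq_norm, dist_eq_norm, Real.coe_toNNReal L hL0] at this
        exact this
      have harg : ‖(proj a - proj b) - ε • (gradφ a - gradφ b)‖ ≤ (1 + ε * L) * ‖a - b‖ := by
        calc ‖(proj a - proj b) - ε • (gradφ a - gradφ b)‖
            ≤ ‖proj a - proj b‖ + ‖ε • (gradφ a - gradφ b)‖ := norm_sub_le _ _
          _ ≤ ‖a - b‖ + ε * (L * ‖a - b‖) := by
              refine add_le_add (hproj_lip a b) ?_
              rw [norm_smul, Real.norm_eq_abs, abs_of_pos hε]
              exact mul_le_mul_of_nonneg_left hgl hε.le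
          _ = (1 + ε * L) * ‖a - b‖ := by ring
      calc ‖Matrix.toEuclideanLin A⁻¹ ((proj a - proj b) - ε • (gradφ a - gradφ b))‖
          ≤ (1 + ε * μ)⁻¹ * ‖(proj a - proj b) - ε • (gradφ a - gradφ b)‖ := hBinv _
        _ ≤ (1 + ε * μ)⁻¹ * ((1 + ε * L) * ‖a - b‖) := by
            exact mul_le_mul_of_nonneg_left harg (inv_nonneg.mpr hμ1.le)
        _ = k * ‖a - b‖ := by rw [hk]; ring
    have hcontr : ContractingWith (Real.toNNReal k) (fun y : EuclideanSpace ℝ (Fin m) =>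
        Matrix.toEuclideanLin ((1 + ε • D⁻¹)⁻¹)
          (proj y - ε • gradφ y + ε • Matrix.toEuclideanLin D⁻¹
            (Matrix.toEuclideanLin C x))) := by
      constructor
      · rw [← Real.toNNReal_one]
        exact (Real.toNNReal_lt_toNNReal_iff one_pos).mpr hklt
      · exact hlipf
    first
    | exact hlipf
    | exact ⟨_, hcontr.fixedPoint_isFixedPt, fun y hy => hcontr.fixedPoint_unique hy⟩
  }
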